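/- Suppose β_min < β_max. If the bits b_1,…,b_m produced by the random-amplification β-encoder satisfy b_k = 1 for some k ≤ m, then the length of the uncertainty interval Î_{(b_1,…,b_m)} = [Σ_{i=1}^m b_i β_max^{−i}, Σ_{i=1}^m b_i β_min^{−i} + κ β_min^{−m}] is at least β_min^{−k} − β_max^{−k} > 0; in particular, along any output sequence containing at least one bit equal to 1, the lengths of these intervals do not converge to 0 as m → ∞. -/
import Mathlib


open MeasureTheory Filter Set Real

/-- Orbit of the random-amplification β-encoder: `rIter βs u x n` is the iterate `x_n`,
where `x_0 = x` and `x_n = βs_n · x_{n-1} − b_n`. -/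
noncomputable def rIter (βs u : ℕ → ℝ) (x : ℝ) : ℕ → ℝ
  | 0 => x
  | n + 1 =>
      if βs (n + 1) * rIter βs u x n < u (n + 1) then βs (n + 1) * rIter βs u x n
      else βs (n + 1) * rIter βs u x n - 1

/-- The bit `b_n` produced by the random-amplification β-encoder at step `n ≥ 1`. -/
noncomputable def rBit (βs u : ℕ → ℝ) (x : ℝ) (n : ℕ) : ℝ :=
  if βs n * rIter βs u x (n - 1) < u n then 0 else 1

/-- β_min < β_max: if some bit `b_k = 1` with `1 ≤ k ≤ m`, then the length
of the uncertainty interval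
`Î_{(b_1,…,b_m)} = [Σ_{i=1}^m b_i β_max^{−i}, Σ_{i=1}^m b_i β_min^{−i} + κ β_min^{−m}]`
is at least `β_min^{−k} − β_max^{−k} > 0`; in particular, if the output sequence contains
at least one bit equal to `1`, these lengths do not converge to `0` as `m → ∞`. -/
theorem stmt_16 (βmin βmax : ℝ) (h1 : 1 < βmin) (h2 : βmin < βmax) (h3 : βmax < 2)
    (βs u : ℕ → ℝ)
    (hβs : ∀ n, 1 ≤ n → βs n ∈ Set.Icc βmin βmax)
    (hu : ∀ n, 1 ≤ n → u n ∈ Set.Icc (1:ℝ) (βmax - 1)⁻¹)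
    (x : ℝ) (hx : x ∈ Set.Icc (0:ℝ) 1) :
    (∀ m k : ℕ, 1 ≤ k → k ≤ m → rBit βs u x k = 1 →
      βmin⁻¹ ^ k - βmax⁻¹ ^ k ≤
        ((∑ i ∈ Finset.Icc 1 m, rBit βs u x i / βmin ^ i) + (βmax - 1)⁻¹ / βmin ^ m) -
          ∑ i ∈ Finset.Icc 1 m, rBit βs u x i / βmax ^ i ∧
      0 < βmin⁻¹ ^ k - βmax⁻¹ ^ k) ∧
    ((∃ k : ℕ, 1 ≤ k ∧ rBit βs u x k = 1) →
      ¬ Filter.Tendsto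
        (fun m : ℕ =>
          ((∑ i ∈ Finset.Icc 1 m, rBit βs u x i / βmin ^ i) + (βmax - 1)⁻¹ / βmin ^ m) -
            ∑ i ∈ Finset.Icc 1 m, rBit βs u x i / βmax ^ i)
        Filter.atTop (nhds 0)) := by

  have hmin0 : (0:ℝ) < βmin := lt_trans one_pos h1
  have hmax0 : (0:ℝ) < βmax := lt_trans hmin0 h2
  have hbit : ∀ i, 0 ≤ rBit βs u x i := by
    intro i; unfold rBit; split <;> norm_num
  have key : ∀ m k : ℕ, 1 ≤ k → k ≤ m → rBit βs u x k = 1 →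
      βmin⁻¹ ^ k - βmax⁻¹ ^ k ≤
        ((∑ i ∈ Finset.Icc 1 m, rBit βs u x i / βmin ^ i) + (βmax - 1)⁻¹ / βmin ^ m) -
          ∑ i ∈ Finset.Icc 1 m, rBit βs u x i / βmax ^ i := by
    intro m k hk1 hkm hbk
    have hterm : ∀ i ∈ Finset.Icc 1 m,
        0 ≤ rBit βs u x i / βmin ^ i - rBit βs u x i / βmax ^ i := by
      intro i _
      have h1 : rBit βs u x i / βmax ^ i ≤ rBit βs u x i / βmin ^ i := by
        apply div_le_div_of_nonneg_left (hbit i) (pow_pos hmin0 i)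
        exact pow_le_pow_left₀ hmin0.le h2.le i
      linarith
    have hksum : rBit βs u x k / βmin ^ k - rBit βs u x k / βmax ^ k ≤
        ∑ i ∈ Finset.Icc 1 m, (rBit βs u x i / βmin ^ i - rBit βs u x i / βmax ^ i) :=
      Finset.single_le_sum hterm (Finset.mem_Icc.mpr ⟨hk1, hkm⟩)
    have hkappa : 0 ≤ (βmax - 1)⁻¹ / βmin ^ m := by
      apply div_nonneg (inv_nonneg.mpr (by linarith)) (pow_pos hmin0 m).le
    rw [Finset.sum_sub_distrib] at hksum
    rw [hbk] at hksum
    simp only [one_div] at hksum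
    rw [inv_pow, inv_pow]
    linarith
  have hpos : ∀ k : ℕ, 1 ≤ k → 0 < βmin⁻¹ ^ k - βmax⁻¹ ^ k := by
    intro k hk
    have : βmax⁻¹ ^ k < βmin⁻¹ ^ k := by
      apply pow_lt_pow_left₀ _ (inv_nonneg.mpr hmax0.le) (by omega)
      exact inv_strictAnti₀ hmin0 h2
    linarith
  refine ⟨fun m k hk1 hkm hbk => ⟨key m k hk1 hkm hbk, hpos k hk1⟩, ?_⟩
  rintro ⟨k, hk1, hbk⟩ htend
  have hev := Filter.Tendsto.eventually_lt_const (hpos k hk1) htend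
  obtain ⟨m, hm⟩ := Filter.eventually_atTop.mp hev
  have hkey := key (max m k) k hk1 (le_max_right m k) hbk
  have h2 := hm (max m k) (le_max_left m k)
  linarith
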